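/- arXiv:2505.18023 — 3 statements merged into one kernel-verified Lean document; each statement's English description precedes it below -/
import Mathlib

section
/- An arrangement of n families of at most k parallel hyperplanes each in ℝ^d partitions ℝ^d into at most ∑_{i=0}^{d} k^i · C(n,i) connected regions (equal to (k+1)^n when n ≤ d). -/
/-!
Label a point off the arrangement by its signature: for each family, the number of its hyperplanes
lying below the point. The points with a given signature form a convex cell, and the cells are
exactly the regions, so it suffices to count the signatures realised in an affine subspace of
dimension `d`. Deleting the last family, a signature of the remaining `n` families extends in at
most `1 + r` ways, where `r` counts the hyperplanes of the deleted family meeting its cell; each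
such hyperplane carries that signature for the `n` families restricted to it, in dimension `d - 1`.
Hence `f(n + 1, d) ≤ f(n, d) + k f(n, d - 1)`, which `∑_{i ≤ d} kⁱ C(n, i)` satisfies with
equality by Pascal's rule.
-/

open Finset Module

namespace ParallelArrangement

noncomputable section

def countBelow (B : Finset ℝ) (t : ℝ) : ℕ := #{b ∈ B | b < t}

def gap (B : Finset ℝ) (m : ℕ) : Set ℝ := {t | t ∉ B ∧ countBelow B t = m}

section OneDim

variable {B : Finset ℝ}

lemma countBelow_mono (B : Finset ℝ) : Monotone (countBelow B) := fun _ _ htu =>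
  card_le_card <| monotone_filter_right B fun _ _ hb => hb.trans_le htu

lemma countBelow_le_card (B : Finset ℝ) (t : ℝ) : countBelow B t ≤ #B := card_filter_le _ _

lemma countBelow_lt_of_mem {b t : ℝ} (hb : b ∈ B) (hbt : b < t) :
    countBelow B b < countBelow B t :=
  card_lt_card <| (ssubset_iff_of_subset (monotone_filter_right B fun _ _ hc => hc.trans hbt)).2
    ⟨b, mem_filter.2 ⟨hb, hbt⟩, by simp⟩

lemma exists_mem_Ico_of_countBelow_lt {t u : ℝ} (h : countBelow B t < countBelow B u) :
    ∃ b ∈ B, b ∈ Set.Ico t u := by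
  obtain ⟨b, hbu, hbt⟩ := exists_mem_notMem_of_card_lt_card h
  simp only [mem_filter, not_and, not_lt] at hbu hbt
  exact ⟨b, hbu.1, hbt hbu.1, hbu.2⟩

lemma ordConnected_gap (B : Finset ℝ) (m : ℕ) : (gap B m).OrdConnected := by
  refine ⟨fun t ⟨_, ht⟩ u ⟨huB, hu⟩ v hv => ?_⟩
  have hle : countBelow B t ≤ countBelow B v := countBelow_mono B hv.1
  have hge : countBelow B v ≤ countBelow B u := countBelow_mono B hv.2
  refine ⟨fun hvB => ?_, by omega⟩
  have hvu : v < u := hv.2.lt_of_ne fun h => huB (h ▸ hvB)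
  have := countBelow_lt_of_mem hvB hvu
  omega

lemma subset_gap_of_isPreconnected {S : Set ℝ} (hS : IsPreconnected S) (hSB : ∀ t ∈ S, t ∉ B)
    {t : ℝ} (ht : t ∈ S) : S ⊆ gap B (countBelow B t) := by
  have hnot_lt : ∀ v ∈ S, ∀ w ∈ S, ¬ countBelow B v < countBelow B w := fun v hv w hw h => by
    obtain ⟨b, hb, hbvw⟩ := exists_mem_Ico_of_countBelow_lt h
    exact hSB b (hS.ordConnected.out hv hw (Set.Ico_subset_Icc_self hbvw)) hb
  exact fun u hu =>
    ⟨hSB u hu, le_antisymm (not_lt.1 (hnot_lt t ht u hu)) (not_lt.1 (hnot_lt u hu t ht))⟩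

open Classical in
-- An interval meeting `B` in `r` points is cut into at most `r + 1` gaps.
lemma card_le_of_subset_countBelow_image {I : Set ℝ} (hI : I.OrdConnected) {J : Finset ℕ}
    (hJ : ↑J ⊆ countBelow B '' I) : #J ≤ #{b ∈ B | b ∈ I} + 1 := by
  rcases J.eq_empty_or_nonempty with rfl | hne
  · simp
  obtain ⟨t, ht, htJ⟩ := hJ (J.min'_mem hne)
  obtain ⟨u, hu, huJ⟩ := hJ (J.max'_mem hne)
  have hcount : countBelow B u ≤ countBelow B t + #{b ∈ B | b ∈ I} := by
    refine (card_le_card fun b hb => ?_).trans (card_union_le _ _)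
    rw [mem_filter] at hb
    rw [mem_union, mem_filter, mem_filter]
    by_cases hbt : b < t
    · exact Or.inl ⟨hb.1, hbt⟩
    · exact Or.inr ⟨hb.1, hI.out ht hu ⟨not_lt.1 hbt, hb.2.le⟩⟩
  calc #J ≤ #(Icc (J.min' hne) (J.max' hne)) :=
        card_le_card fun j hj => mem_Icc.2 ⟨J.min'_le j hj, J.le_max' j hj⟩
    _ = J.max' hne + 1 - J.min' hne := Nat.card_Icc _ _
    _ ≤ #{b ∈ B | b ∈ I} + 1 := by omega

end OneDim

section Cells

variable {E ι : Type*} [AddCommGroup E] [Module ℝ E]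
  {ℓ : ι → E →ₗ[ℝ] ℝ} {B : ι → Finset ℝ} {σ : ι → ℕ} {x : E}

def cell (ℓ : ι → E →ₗ[ℝ] ℝ) (B : ι → Finset ℝ) (σ : ι → ℕ) : Set E :=
  ⋂ i, ℓ i ⁻¹' gap (B i) (σ i)

def signature (ℓ : ι → E →ₗ[ℝ] ℝ) (B : ι → Finset ℝ) (x : E) : ι → ℕ :=
  fun i => countBelow (B i) (ℓ i x)

lemma convex_cell : Convex ℝ (cell ℓ B σ) :=
  convex_iInter fun _ => (ordConnected_gap _ _).convex.linear_preimage _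

lemma cell_subset : cell ℓ B σ ⊆ {y | ∀ i, ℓ i y ∉ B i} := fun _ hy i =>
  (Set.mem_iInter.1 hy i).1

lemma eq_countBelow_of_mem_cell (hx : x ∈ cell ℓ B σ) (i : ι) :
    σ i = countBelow (B i) (ℓ i x) :=
  (Set.mem_iInter.1 hx i).2.symm

lemma mem_cell_signature (hx : ∀ i, ℓ i x ∉ B i) : x ∈ cell ℓ B (signature ℓ B x) :=
  Set.mem_iInter.2 fun i => ⟨hx i, rfl⟩

section Topology

variable [TopologicalSpace E] [IsTopologicalAddGroup E] [ContinuousSMul ℝ E]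

lemma connectedComponentIn_eq_cell (hℓ : ∀ i, Continuous (ℓ i)) (hx : ∀ i, ℓ i x ∉ B i) :
    connectedComponentIn {y | ∀ i, ℓ i y ∉ B i} x = cell ℓ B (signature ℓ B x) := by
  refine Set.Subset.antisymm (fun y hy => Set.mem_iInter.2 fun i => ?_) ?_
  · have hC := isPreconnected_connectedComponentIn (x := x) (F := {y | ∀ i, ℓ i y ∉ B i})
    refine subset_gap_of_isPreconnected (hC.image _ (hℓ i).continuousOn) ?_
      (Set.mem_image_of_mem _ (mem_connectedComponentIn hx)) (Set.mem_image_of_mem _ hy)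
    rintro _ ⟨z, hz, rfl⟩
    exact connectedComponentIn_subset _ _ hz i
  · exact convex_cell.isPreconnected.subset_connectedComponentIn (mem_cell_signature hx)
      cell_subset

end Topology

open Classical in
-- The bound `σ i ≤ #(B i)` holds for every realised signature (`mem_signatures`); it only makes
-- this a `Finset`.
def signatures [Fintype ι] (s : Set E) (ℓ : ι → E →ₗ[ℝ] ℝ) (B : ι → Finset ℝ) :
    Finset (ι → ℕ) :=
  {σ ∈ Fintype.piFinset fun i => range (#(B i) + 1) | (s ∩ cell ℓ B σ).Nonempty}

lemma mem_signatures [Fintype ι] {s : Set E} :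
    σ ∈ signatures s ℓ B ↔ (s ∩ cell ℓ B σ).Nonempty := by
  classical
  refine ⟨fun h => (mem_filter.1 h).2, fun h => mem_filter.2 ⟨?_, h⟩⟩
  obtain ⟨x, -, hx⟩ := h
  exact Fintype.mem_piFinset.2 fun i => mem_range.2 <|
    Nat.lt_succ_of_le ((eq_countBelow_of_mem_cell hx i).trans_le (countBelow_le_card _ _))

end Cells

section DeletionRestriction

variable {E : Type*} [AddCommGroup E] [Module ℝ E] {n : ℕ} {s : Set E}
  (ℓ : Fin (n + 1) → E →ₗ[ℝ] ℝ) (B : Fin (n + 1) → Finset ℝ)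

lemma init_mem_cell {σ : Fin (n + 1) → ℕ} {x : E} (hx : x ∈ cell ℓ B σ) :
    x ∈ cell (Fin.init ℓ) (Fin.init B) (Fin.init σ) :=
  Set.mem_iInter.2 fun i => Set.mem_iInter.1 hx i.castSucc

lemma init_mem_signatures {σ : Fin (n + 1) → ℕ} (hσ : σ ∈ signatures s ℓ B) :
    Fin.init σ ∈ signatures s (Fin.init ℓ) (Fin.init B) := by
  obtain ⟨x, hxs, hx⟩ := mem_signatures.1 hσ
  exact mem_signatures.2 ⟨x, hxs, init_mem_cell ℓ B hx⟩

lemma eq_of_init_eq_of_last_eq {σ σ' : Fin (n + 1) → ℕ} (hinit : Fin.init σ = Fin.init σ')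
    (hlast : σ (Fin.last n) = σ' (Fin.last n)) : σ = σ' := by
  rw [← Fin.snoc_init_self σ, ← Fin.snoc_init_self σ', hinit, hlast]

open Classical in
lemma card_fiber_signatures_le (hs : Convex ℝ s) (τ : Fin n → ℕ) :
    #{σ ∈ signatures s ℓ B | Fin.init σ = τ} ≤
      #{b ∈ B (Fin.last n) |
        τ ∈ signatures (s ∩ {x | ℓ (Fin.last n) x = b}) (Fin.init ℓ) (Fin.init B)} + 1 := by
  set F := {σ ∈ signatures s ℓ B | Fin.init σ = τ}
  set I := ℓ (Fin.last n) '' (s ∩ cell (Fin.init ℓ) (Fin.init B) τ)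
  have hI : I.OrdConnected := ((hs.inter convex_cell).linear_image _).ordConnected
  have hinj : Set.InjOn (fun σ : Fin (n + 1) → ℕ => σ (Fin.last n)) F := fun σ hσ σ' hσ' h =>
    eq_of_init_eq_of_last_eq ((mem_filter.1 hσ).2.trans (mem_filter.1 hσ').2.symm) h
  have himage : ↑(F.image fun σ => σ (Fin.last n)) ⊆ countBelow (B (Fin.last n)) '' I := by
    intro j hj
    obtain ⟨σ, hσF, rfl⟩ := mem_image.1 hj
    obtain ⟨hσ, rfl⟩ := mem_filter.1 hσF
    obtain ⟨x, hxs, hx⟩ := mem_signatures.1 hσ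
    exact ⟨ℓ (Fin.last n) x, ⟨x, ⟨hxs, init_mem_cell ℓ B hx⟩, rfl⟩,
      (eq_countBelow_of_mem_cell hx _).symm⟩
  calc #F = #(F.image fun σ => σ (Fin.last n)) := (card_image_of_injOn hinj).symm
    _ ≤ #{b ∈ B (Fin.last n) | b ∈ I} + 1 := card_le_of_subset_countBelow_image hI himage
    _ ≤ _ := by
      gcongr with b
      rintro ⟨x, ⟨hxs, hx⟩, rfl⟩
      exact mem_signatures.2 ⟨x, ⟨hxs, rfl⟩, hx⟩

lemma card_signatures_le_add_sum (hs : Convex ℝ s) :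
    #(signatures s ℓ B) ≤ #(signatures s (Fin.init ℓ) (Fin.init B)) +
      ∑ b ∈ B (Fin.last n),
        #(signatures (s ∩ {x | ℓ (Fin.last n) x = b}) (Fin.init ℓ) (Fin.init B)) := by
  classical
  set T := signatures s (Fin.init ℓ) (Fin.init B)
  set R := fun b => signatures (s ∩ {x | ℓ (Fin.last n) x = b}) (Fin.init ℓ) (Fin.init B)
  calc #(signatures s ℓ B) = ∑ τ ∈ T, #{σ ∈ signatures s ℓ B | Fin.init σ = τ} :=
        card_eq_sum_card_fiberwise fun σ hσ => init_mem_signatures ℓ B hσ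
    _ ≤ ∑ τ ∈ T, (#{b ∈ B (Fin.last n) | τ ∈ R b} + 1) :=
        sum_le_sum fun τ _ => by convert card_fiber_signatures_le ℓ B hs τ
    _ = #T + ∑ b ∈ B (Fin.last n), #{τ ∈ T | τ ∈ R b} := by
        simp_rw [sum_add_distrib, card_filter]
        rw [sum_comm, add_comm, card_eq_sum_ones]
    _ ≤ #T + ∑ b ∈ B (Fin.last n), #(R b) := by
        gcongr with b _
        exact fun τ hτ => (mem_filter.1 hτ).2

lemma card_signatures_le_of_forall_eq
    (hconst : ∀ x ∈ s, ∀ y ∈ s, ℓ (Fin.last n) x = ℓ (Fin.last n) y) :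
    #(signatures s ℓ B) ≤ #(signatures s (Fin.init ℓ) (Fin.init B)) := by
  refine card_le_card_of_injOn Fin.init (fun σ hσ => init_mem_signatures ℓ B hσ)
    fun σ hσ σ' hσ' hinit => eq_of_init_eq_of_last_eq hinit ?_
  obtain ⟨x, hxs, hx⟩ := mem_signatures.1 hσ
  obtain ⟨x', hxs', hx'⟩ := mem_signatures.1 hσ'
  rw [eq_countBelow_of_mem_cell hx, eq_countBelow_of_mem_cell hx', hconst x hxs x' hxs']

end DeletionRestriction

lemma exists_affineSubspace_inter_eq {E : Type*} [AddCommGroup E] [Module ℝ E]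
    [FiniteDimensional ℝ E] (s : AffineSubspace ℝ E) {f : E →ₗ[ℝ] ℝ}
    (hf : ¬ s.direction ≤ LinearMap.ker f) (b : ℝ) :
    ∃ t : AffineSubspace ℝ E, (s : Set E) ∩ {x | f x = b} = t ∧
      finrank ℝ t.direction < finrank ℝ s.direction := by
  by_cases hne : ((s : Set E) ∩ {x | f x = b}).Nonempty
  · obtain ⟨z, hzs, hzb⟩ := hne
    refine ⟨AffineSubspace.mk' z (s.direction ⊓ LinearMap.ker f), ?_, ?_⟩
    · ext x
      rw [Set.mem_inter_iff, SetLike.mem_coe, SetLike.mem_coe, AffineSubspace.mem_mk',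
        Submodule.mem_inf, AffineSubspace.vsub_right_mem_direction_iff_mem hzs, LinearMap.mem_ker,
        vsub_eq_sub, map_sub, hzb, sub_eq_zero]
      rfl
    · rw [AffineSubspace.direction_mk']
      exact Submodule.finrank_lt_finrank_of_lt (inf_lt_left.2 hf)
  · refine ⟨⊥, by simpa [Set.not_nonempty_iff_eq_empty] using hne, ?_⟩
    rw [AffineSubspace.direction_bot, finrank_bot]
    exact Nat.pos_of_ne_zero fun h => hf (Submodule.finrank_eq_zero.1 h ▸ bot_le)

def regionBound (k n d : ℕ) : ℕ := ∑ i ∈ range (d + 1), k ^ i * n.choose i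

lemma regionBound_zero_left (k d : ℕ) : regionBound k 0 d = 1 := by
  simp [regionBound, sum_range_succ']

lemma regionBound_le_succ_left (k n d : ℕ) : regionBound k n d ≤ regionBound k (n + 1) d :=
  sum_le_sum fun i _ => Nat.mul_le_mul_left _ (Nat.choose_le_succ n i)

lemma regionBound_succ_succ (k n d : ℕ) :
    regionBound k (n + 1) (d + 1) = regionBound k n (d + 1) + k * regionBound k n d := by
  have hshift (i : ℕ) : k * (k ^ i * n.choose i) = k ^ (i + 1) * n.choose i := by ring
  simp only [regionBound, sum_range_succ' _ (d + 1), Nat.choose_succ_succ, mul_add,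
    sum_add_distrib, mul_sum, hshift, Nat.choose_zero_right]
  ring

lemma regionBound_of_le {k n d : ℕ} (h : n ≤ d) : regionBound k n d = (k + 1) ^ n := by
  rw [add_pow, regionBound, ← sum_subset (range_subset_range.2 (Nat.succ_le_succ h))]
  · simp
  · intro i _ hi
    rw [Nat.choose_eq_zero_of_lt (by simpa using hi), mul_zero]

theorem card_signatures_le {E : Type*} [AddCommGroup E] [Module ℝ E] [FiniteDimensional ℝ E]
    {k n d : ℕ} (s : AffineSubspace ℝ E) (hd : finrank ℝ s.direction ≤ d)
    (ℓ : Fin n → E →ₗ[ℝ] ℝ) (B : Fin n → Finset ℝ) (hB : ∀ i, #(B i) ≤ k) :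
    #(signatures s ℓ B) ≤ regionBound k n d := by
  induction n generalizing d s with
  | zero =>
    rw [regionBound_zero_left]
    exact card_le_one_of_subsingleton _
  | succ n ih =>
    have hB' : ∀ i, #(Fin.init B i) ≤ k := fun i => hB i.castSucc
    by_cases hf : s.direction ≤ LinearMap.ker (ℓ (Fin.last n))
    · have hconst : ∀ x ∈ s, ∀ y ∈ s, ℓ (Fin.last n) x = ℓ (Fin.last n) y := fun x hx y hy =>
        sub_eq_zero.1 (by simpa using hf (AffineSubspace.vsub_mem_direction hx hy))
      calc #(signatures s ℓ B) ≤ #(signatures s (Fin.init ℓ) (Fin.init B)) :=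
            card_signatures_le_of_forall_eq ℓ B hconst
        _ ≤ regionBound k n d := ih s hd _ _ hB'
        _ ≤ regionBound k (n + 1) d := regionBound_le_succ_left k n d
    · obtain ⟨m, rfl⟩ : ∃ m, d = m + 1 := Nat.exists_eq_add_one_of_ne_zero <| by
        obtain ⟨t, -, ht⟩ := exists_affineSubspace_inter_eq s hf 0
        omega
      calc #(signatures s ℓ B)
          ≤ #(signatures s (Fin.init ℓ) (Fin.init B)) + ∑ b ∈ B (Fin.last n),
              #(signatures (s ∩ {x | ℓ (Fin.last n) x = b}) (Fin.init ℓ) (Fin.init B)) :=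
            card_signatures_le_add_sum ℓ B s.convex
        _ ≤ regionBound k n (m + 1) + ∑ _b ∈ B (Fin.last n), regionBound k n m := by
            gcongr with b
            · exact ih s hd _ _ hB'
            · obtain ⟨t, ht, htd⟩ := exists_affineSubspace_inter_eq s hf b
              rw [ht]
              exact ih t (by omega) _ _ hB'
        _ ≤ regionBound k n (m + 1) + k * regionBound k n m := by
            rw [sum_const, smul_eq_mul]
            gcongr
            exact hB _
        _ = regionBound k (n + 1) (m + 1) := (regionBound_succ_succ k n m).symm

section Regions

variable {E ι : Type*} [AddCommGroup E] [Module ℝ E] [TopologicalSpace E]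
  [IsTopologicalAddGroup E] [ContinuousSMul ℝ E] [Fintype ι]

lemma ncard_connectedComponentIn_le {ℓ : ι → E →ₗ[ℝ] ℝ} (hℓ : ∀ i, Continuous (ℓ i))
    (B : ι → Finset ℝ) :
    {S | ∃ x ∈ {y | ∀ i, ℓ i y ∉ B i}, S = connectedComponentIn {y | ∀ i, ℓ i y ∉ B i} x}.ncard
      ≤ #(signatures Set.univ ℓ B) := by
  classical
  calc _ ≤ (↑((signatures Set.univ ℓ B).image (cell ℓ B)) : Set (Set E)).ncard := by
        refine Set.ncard_le_ncard ?_ (finite_toSet _)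
        rintro _ ⟨x, hx, rfl⟩
        rw [coe_image, connectedComponentIn_eq_cell hℓ hx]
        exact Set.mem_image_of_mem _ (mem_signatures.2 ⟨x, trivial, mem_cell_signature hx⟩)
    _ ≤ #(signatures Set.univ ℓ B) := by
        rw [Set.ncard_coe_finset]
        exact card_image_le

end Regions

end

end ParallelArrangement

open ParallelArrangement

theorem stmt_2_general (d n k : ℕ)
    (a : Fin n → (Fin d → ℝ))
    (B : Fin n → Finset ℝ) (hB : ∀ i, (B i).card ≤ k)
    (U : Set (Fin d → ℝ))
    (hU : U = {x : Fin d → ℝ | ∃ i : Fin n, ∃ b ∈ B i, ∑ j, a i j * x j = b}) :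
    Set.ncard {S : Set (Fin d → ℝ) | ∃ x ∈ Uᶜ, S = connectedComponentIn Uᶜ x}
        ≤ ∑ i ∈ Finset.range (d + 1), k ^ i * n.choose i
    ∧ (n ≤ d →
      Set.ncard {S : Set (Fin d → ℝ) | ∃ x ∈ Uᶜ, S = connectedComponentIn Uᶜ x}
        ≤ (k + 1) ^ n) := by
  let ℓ : Fin n → (Fin d → ℝ) →ₗ[ℝ] ℝ := fun i =>
    LinearMap.proj i ∘ₗ Matrix.mulVecLin (Matrix.of a)
  have hUc : Uᶜ = {x | ∀ i, ℓ i x ∉ B i} := by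
    subst hU
    ext x
    simp [ℓ, Matrix.mulVec, dotProduct]
  have hregions : Set.ncard {S | ∃ x ∈ Uᶜ, S = connectedComponentIn Uᶜ x} ≤ regionBound k n d := by
    rw [hUc]
    refine (ncard_connectedComponentIn_le
      (fun _ => LinearMap.continuous_of_finiteDimensional _) B).trans ?_
    simpa using card_signatures_le (⊤ : AffineSubspace ℝ (Fin d → ℝ))
      (by rw [AffineSubspace.direction_top, finrank_top, finrank_fin_fun]) ℓ B hB
  exact ⟨hregions, fun hnd => regionBound_of_le hnd ▸ hregions⟩

/-- An arrangement of `n` families of at most `k` parallel hyperplanes each in `ℝ^d`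
partitions `ℝ^d` into at most `∑_{i=0}^{d} k^i * C(n,i)` connected regions, which
equals `(k+1)^n` when `n ≤ d`. -/
theorem stmt_2 (d n k : ℕ)
    (a : Fin n → (Fin d → ℝ)) (ha : ∀ i, a i ≠ 0)
    (B : Fin n → Finset ℝ) (hB : ∀ i, (B i).card ≤ k)
    (U : Set (Fin d → ℝ))
    (hU : U = {x : Fin d → ℝ | ∃ i : Fin n, ∃ b ∈ B i, ∑ j, a i j * x j = b}) :
    Set.ncard {S : Set (Fin d → ℝ) | ∃ x ∈ Uᶜ, S = connectedComponentIn Uᶜ x}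
        ≤ ∑ i ∈ Finset.range (d + 1), k ^ i * n.choose i
    ∧ (n ≤ d →
      Set.ncard {S : Set (Fin d → ℝ) | ∃ x ∈ Uᶜ, S = connectedComponentIn Uᶜ x}
        ≤ (k + 1) ^ n) :=
  stmt_2_general d n k a B hB U hU
end

section
/- Consider the discrete LIF dynamics on {0,1}-valued spike inputs: with β=1, θ=1, weight 1+ε for 0<ε<1/T, zero bias, and u(0)=0, define recursively s(t) = H(u(t-1) + (1+ε)·s⁰(t) − 1) and u(t) = u(t-1) + (1+ε)·s⁰(t) − s(t), where H is the Heaviside function (H(x)=1 iff x≥0). Then for every input spike train s⁰ ∈ {0,1}^T and every t ∈ {1,…,T}, s(t) = s⁰(t), and moreover u(t) = ε·(number of indices i ≤ t with s⁰(i)=1). -/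
/-!
Since the weight exceeds the threshold, an input spike always fires the neuron, and firing
removes exactly 1 from the potential, so each input spike leaves a residue of `ε`.  Hence
after `t` steps the potential is `ε` times the number of input spikes so far, which is below
`ε T < 1` as long as `t < T`; with no input spike such a potential stays below threshold.
-/

open scoped Classical

/-- The Heaviside step function, with `H 0 = 1`. -/
noncomputable def heaviside (x : ℝ) : ℝ := if 0 ≤ x then 1 else 0

open Finset

theorem heaviside_add_mul_sub_one_eq_self {v ε x : ℝ} (hv₀ : 0 ≤ v) (hv₁ : v < 1) (hε : 0 ≤ ε)
    (hx : x = 0 ∨ x = 1) : heaviside (v + (1 + ε) * x - 1) = x := by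
  rcases hx with rfl | rfl
  · exact if_neg (by linarith)
  · exact if_pos (by linarith)

theorem card_filter_Icc_one_succ (p : ℕ → Prop) [DecidablePred p] (n : ℕ) :
    #{i ∈ Icc 1 (n + 1) | p i} = #{i ∈ Icc 1 n | p i} + if p (n + 1) then 1 else 0 := by
  simp only [card_filter]
  exact sum_Icc_succ_top (by omega) _

theorem mul_card_filter_Icc_one_lt_one {T n : ℕ} {ε : ℝ} (hε : 0 ≤ ε) (hεT : ε < 1 / T)
    (hn : n < T) (p : ℕ → Prop) [DecidablePred p] : ε * #{i ∈ Icc 1 n | p i} < 1 := by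
  have hT : (0 : ℝ) < T := by exact_mod_cast n.zero_le.trans_lt hn
  have hcard : (#{i ∈ Icc 1 n | p i} : ℝ) < T := by
    have : #{i ∈ Icc 1 n | p i} ≤ n := (card_filter_le _ _).trans (by simp)
    exact_mod_cast this.trans_lt hn
  calc ε * #{i ∈ Icc 1 n | p i} ≤ ε * T := by gcongr
    _ < 1 := by rwa [lt_div_iff₀ hT] at hεT

section LIF

variable {T : ℕ} {ε : ℝ} {s0 s u : ℕ → ℝ}

theorem lif_spike_eq_of_potential_eq (hε : 0 ≤ ε) (hεT : ε < 1 / T)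
    (hs0 : ∀ t, s0 t = 0 ∨ s0 t = 1)
    (hs : ∀ t : ℕ, s (t + 1) = heaviside (u t + (1 + ε) * s0 (t + 1) - 1))
    {n : ℕ} (hn : n < T) (hun : u n = ε * #{i ∈ Icc 1 n | s0 i = 1}) :
    s (n + 1) = s0 (n + 1) := by
  rw [hs, hun]
  exact heaviside_add_mul_sub_one_eq_self (by positivity)
    (mul_card_filter_Icc_one_lt_one hε hεT hn _) hε (hs0 _)

theorem lif_potential_eq (hε : 0 ≤ ε) (hεT : ε < 1 / T)
    (hs0 : ∀ t, s0 t = 0 ∨ s0 t = 1) (hu0 : u 0 = 0)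
    (hs : ∀ t : ℕ, s (t + 1) = heaviside (u t + (1 + ε) * s0 (t + 1) - 1))
    (hu : ∀ t : ℕ, u (t + 1) = u t + (1 + ε) * s0 (t + 1) - s (t + 1)) :
    ∀ t ≤ T, u t = ε * #{i ∈ Icc 1 t | s0 i = 1} := by
  intro t ht
  induction t with
  | zero => simp [hu0]
  | succ n ih =>
    have hun := ih (by omega)
    rw [hu, lif_spike_eq_of_potential_eq hε hεT hs0 hs (by omega) hun, hun,
      card_filter_Icc_one_succ]
    rcases hs0 (n + 1) with h | h
    · simp [h]
    · simp [h]; ring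

end LIF

theorem stmt_3_general (T : ℕ) (ε : ℝ) (hε : 0 < ε) (hεT : ε < 1 / T)
    (s0 : ℕ → ℝ) (hs0 : ∀ t, s0 t = 0 ∨ s0 t = 1)
    (s u : ℕ → ℝ) (hu0 : u 0 = 0)
    (hs : ∀ t : ℕ, s (t + 1) = heaviside (u t + (1 + ε) * s0 (t + 1) - 1))
    (hu : ∀ t : ℕ, u (t + 1) = u t + (1 + ε) * s0 (t + 1) - s (t + 1)) :
    ∀ t : ℕ, 1 ≤ t → t ≤ T →
      s t = s0 t ∧
      u t = ε * ((Finset.Icc 1 t).filter (fun i => s0 i = 1)).card := by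
  have hpot := lif_potential_eq hε.le hεT hs0 hu0 hs hu
  rintro t ht₁ htT
  obtain ⟨n, rfl⟩ : ∃ n, t = n + 1 := ⟨t - 1, by omega⟩
  exact ⟨lif_spike_eq_of_potential_eq hε.le hεT hs0 hs (by omega) (hpot n (by omega)), hpot _ htT⟩

/-- With β = 1, θ = 1, weight 1+ε (0 < ε < 1/T), zero bias and u(0) = 0, the
discrete-time LIF neuron realizes the identity on binary spike trains, and its
membrane potential equals ε times the number of past input spikes. -/
theorem stmt_3 (T : ℕ) (hT : 0 < T) (ε : ℝ) (hε : 0 < ε) (hεT : ε < 1 / T)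
    (s0 : ℕ → ℝ) (hs0 : ∀ t, s0 t = 0 ∨ s0 t = 1)
    (s u : ℕ → ℝ) (hu0 : u 0 = 0)
    (hs : ∀ t : ℕ, s (t + 1) = heaviside (u t + (1 + ε) * s0 (t + 1) - 1))
    (hu : ∀ t : ℕ, u (t + 1) = u t + (1 + ε) * s0 (t + 1) - s (t + 1)) :
    ∀ t : ℕ, 1 ≤ t → t ≤ T →
      s t = s0 t ∧
      u t = ε * ((Finset.Icc 1 t).filter (fun i => s0 i = 1)).card :=
  stmt_3_general T ε hε hεT s0 hs0 s u hu0 hs hu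
end

section
/- Let T ≥ 1. Define N(t) as the number of distinct binary sequences in {0,1}^t that arise as spike trains (s(1),…,s(t)) of a single discrete-time LIF neuron as the constant input c ranges over ℝ (with β, θ, u(0) fixed). Then N(t) ≤ N(t−1) + t for all t ∈ [T], and consequently N(T) ≤ 1 + T(T+1)/2. -/
open Finset

lemma heaviside_eq_zero_or_one (x : ℝ) : heaviside x = 0 ∨ heaviside x = 1 := by
  unfold heaviside
  split_ifs <;> simp

lemma heaviside_eq_one_iff {x : ℝ} : heaviside x = 1 ↔ 0 ≤ x := by
  unfold heaviside
  split_ifs with h <;> simp [h]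

lemma heaviside_eq_zero_iff {x : ℝ} : heaviside x = 0 ↔ x < 0 := by
  unfold heaviside
  split_ifs with h <;> simpa using h

lemma sum_eq_card_of_zero_or_one {α : Type*} {s : Finset α} {g : α → ℝ}
    (hg : ∀ i ∈ s, g i = 0 ∨ g i = 1) : ∑ i ∈ s, g i = #{i ∈ s | g i = 1} := by
  classical
  rw [natCast_card_filter]
  refine sum_congr rfl fun i hi => ?_
  rcases hg i hi with h | h <;> simp [h]

lemma sum_add_one_le_of_lt {α : Type*} {s : Finset α} {g h : α → ℝ}
    (hg : ∀ i ∈ s, g i = 0 ∨ g i = 1) (hh : ∀ i ∈ s, h i = 0 ∨ h i = 1)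
    (hlt : ∑ i ∈ s, g i < ∑ i ∈ s, h i) : ∑ i ∈ s, g i + 1 ≤ ∑ i ∈ s, h i := by
  rw [sum_eq_card_of_zero_or_one hg, sum_eq_card_of_zero_or_one hh] at hlt ⊢
  exact_mod_cast Nat.cast_lt.mp hlt

lemma eq_of_forall_sum_range_eq {g h : ℕ → ℝ} {m : ℕ}
    (hgh : ∀ t ≤ m, ∑ j ∈ range t, g j = ∑ j ∈ range t, h j) : ∀ j < m, g j = h j := by
  intro j hj
  have := hgh (j + 1) hj
  rwa [sum_range_succ, sum_range_succ, hgh j hj.le, add_right_inj] at this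

section Patterns

variable {ι : Type*} {f : ι → ℕ → ℝ}

def patterns (f : ι → ℕ → ℝ) (t : ℕ) : Set (Fin t → ℝ) :=
  {v | ∃ c, ∀ i : Fin t, v i = f c i}

def forks (f : ι → ℕ → ℝ) (m : ℕ) : Set (Fin m → ℝ) :=
  {p | (Fin.snoc p 0 : Fin (m + 1) → ℝ) ∈ patterns f (m + 1) ∧
    (Fin.snoc p 1 : Fin (m + 1) → ℝ) ∈ patterns f (m + 1)}

lemma patterns_finite (h01 : ∀ c j, f c j = 0 ∨ f c j = 1) (t : ℕ) :
    (patterns f t).Finite := by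
  refine (Set.Finite.pi (t := fun _ => ({0, 1} : Set ℝ)) fun _ => by simp).subset ?_
  rintro v ⟨c, hc⟩ i -
  simpa [hc i] using h01 c i

lemma init_mem_patterns {m : ℕ} {v : Fin (m + 1) → ℝ} (hv : v ∈ patterns f (m + 1)) :
    Fin.init v ∈ patterns f m := by
  obtain ⟨c, hc⟩ := hv
  exact ⟨c, fun i => hc i.castSucc⟩

lemma snoc_mem_patterns_iff {m : ℕ} {p : Fin m → ℝ} {x : ℝ} :
    (Fin.snoc p x : Fin (m + 1) → ℝ) ∈ patterns f (m + 1) ↔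
      ∃ c, (∀ i : Fin m, p i = f c i) ∧ x = f c m := by
  simp only [patterns, Set.mem_ofPred_eq, Fin.forall_fin_succ', Fin.snoc_castSucc,
    Fin.val_castSucc, Fin.snoc_last, Fin.val_last]

lemma forks_subset_patterns {m : ℕ} : forks f m ⊆ patterns f m := fun p hp => by
  simpa only [Fin.init_snoc] using init_mem_patterns hp.1

lemma ncard_patterns_succ_le_add_ncard_forks (h01 : ∀ c j, f c j = 0 ∨ f c j = 1) (m : ℕ) :
    (patterns f (m + 1)).ncard ≤ (patterns f m).ncard + (forks f m).ncard := by
  set B := patterns f (m + 1)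
  let S (x : ℝ) : Set (Fin (m + 1) → ℝ) := {v ∈ B | v (Fin.last m) = x}
  have hB : B ⊆ S 0 ∪ S 1 := by
    rintro v hv
    obtain ⟨c, hc⟩ := id hv
    rcases h01 c m with h | h
    · exact .inl ⟨hv, by simpa [h] using hc (Fin.last m)⟩
    · exact .inr ⟨hv, by simpa [h] using hc (Fin.last m)⟩
  have hinj (x : ℝ) : Set.InjOn Fin.init (S x) := by
    intro v hv w hw hvw
    rw [← Fin.snoc_init_self v, ← Fin.snoc_init_self w, hvw, hv.2, hw.2]
  have hSfin (x : ℝ) : (S x).Finite := (patterns_finite h01 (m + 1)).subset fun _ h => h.1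
  have hfin (x : ℝ) : (Fin.init '' S x).Finite := (hSfin x).image _
  have hunion : Fin.init '' S 0 ∪ Fin.init '' S 1 ⊆ patterns f m := by
    rintro _ (⟨v, hv, rfl⟩ | ⟨v, hv, rfl⟩) <;> exact init_mem_patterns hv.1
  have hinter : Fin.init '' S 0 ∩ Fin.init '' S 1 ⊆ forks f m := by
    rintro _ ⟨⟨v, hv, rfl⟩, ⟨w, hw, hvw⟩⟩
    refine ⟨?_, ?_⟩
    · simpa only [← hv.2, Fin.snoc_init_self] using hv.1
    · simpa only [← hvw, ← hw.2, Fin.snoc_init_self] using hw.1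
  calc B.ncard
      ≤ (S 0).ncard + (S 1).ncard :=
        (Set.ncard_le_ncard hB ((hSfin 0).union (hSfin 1))).trans (Set.ncard_union_le _ _)
    _ = (Fin.init '' S 0).ncard + (Fin.init '' S 1).ncard := by
        rw [(hinj 0).ncard_image, (hinj 1).ncard_image]
    _ = (Fin.init '' S 0 ∪ Fin.init '' S 1).ncard + (Fin.init '' S 0 ∩ Fin.init '' S 1).ncard :=
        (Set.ncard_union_add_ncard_inter _ _ (hfin 0) (hfin 1)).symm
    _ ≤ (patterns f m).ncard + (forks f m).ncard :=
        add_le_add (Set.ncard_le_ncard hunion (patterns_finite h01 m))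
          (Set.ncard_le_ncard hinter ((patterns_finite h01 m).subset forks_subset_patterns))

variable [LinearOrder ι]

lemma forall_lt_eq_of_forks (hmono : ∀ t, Monotone fun c => ∑ j ∈ range t, f c j) {m : ℕ}
    {a a' b b' : ι}
    (ha : ∀ j < m, f a j = f a' j) (hb : ∀ j < m, f b j = f b' j)
    (ha0 : f a m = 0) (ha1 : f a' m = 1) (hb0 : f b m = 0) (hb1 : f b' m = 1)
    (hab : ∑ j ∈ range m, f a j = ∑ j ∈ range m, f b j) : ∀ j < m, f a j = f b j := by
  have hsum_eq {c c' : ι} (h : ∀ j < m, f c j = f c' j) (t : ℕ) (ht : t ≤ m) :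
      ∑ j ∈ range t, f c j = ∑ j ∈ range t, f c' j :=
    sum_congr rfl fun j hj => h j ((mem_range.mp hj).trans_le ht)
  have hab' : a < b' := (hmono (m + 1)).reflect_lt <| by
    simp only [sum_range_succ, ha0, hb1, hab, ← hsum_eq hb m le_rfl]
    linarith
  have hba' : b < a' := (hmono (m + 1)).reflect_lt <| by
    simp only [sum_range_succ, hb0, ha1, ← hab, ← hsum_eq ha m le_rfl]
    linarith
  refine eq_of_forall_sum_range_eq fun t ht => le_antisymm ?_ ?_
  · rw [hsum_eq hb t ht]
    exact hmono t hab'.le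
  · rw [hsum_eq ha t ht]
    exact hmono t hba'.le

lemma ncard_forks_le (h01 : ∀ c j, f c j = 0 ∨ f c j = 1)
    (hmono : ∀ t, Monotone fun c => ∑ j ∈ range t, f c j) (m : ℕ) :
    (forks f m).ncard ≤ m + 1 := by
  have hsum {p : Fin m → ℝ} {c : ι} (hp : ∀ i : Fin m, p i = f c i) :
      ∑ j ∈ range m, f c j = #{i | p i = 1} := by
    rw [← Fin.sum_univ_eq_sum_range (f c ·)]
    simp_rw [← hp]
    exact sum_eq_card_of_zero_or_one fun i _ => hp i ▸ h01 c i
  calc (forks f m).ncard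
      ≤ (range (m + 1) : Set ℕ).ncard := by
        refine Set.ncard_le_ncard_of_injOn (fun p => #{i | p i = 1}) (fun p _ => ?_) ?_
        · simpa [Nat.lt_succ_iff] using (card_filter_le _ _).trans (card_fin m).le
        · rintro p ⟨hp0, hp1⟩ q ⟨hq0, hq1⟩ hpq
          obtain ⟨a, hap, ha0⟩ := snoc_mem_patterns_iff.1 hp0
          obtain ⟨a', ha'p, ha1⟩ := snoc_mem_patterns_iff.1 hp1
          obtain ⟨b, hbq, hb0⟩ := snoc_mem_patterns_iff.1 hq0
          obtain ⟨b', hb'q, hb1⟩ := snoc_mem_patterns_iff.1 hq1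
          have hab := forall_lt_eq_of_forks hmono
            (fun j hj => (hap ⟨j, hj⟩).symm.trans (ha'p ⟨j, hj⟩))
            (fun j hj => (hbq ⟨j, hj⟩).symm.trans (hb'q ⟨j, hj⟩)) ha0.symm ha1.symm hb0.symm
            hb1.symm (by rw [hsum hap, hsum hbq]; exact_mod_cast hpq)
          funext i
          rw [hap i, hbq i]
          exact hab i i.2
    _ = m + 1 := by simp

lemma ncard_patterns_succ_le (h01 : ∀ c j, f c j = 0 ∨ f c j = 1)
    (hmono : ∀ t, Monotone fun c => ∑ j ∈ range t, f c j) (m : ℕ) :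
    (patterns f (m + 1)).ncard ≤ (patterns f m).ncard + (m + 1) :=
  (ncard_patterns_succ_le_add_ncard_forks h01 m).trans
    (Nat.add_le_add_left (ncard_forks_le h01 hmono m) _)

lemma ncard_patterns_le (h01 : ∀ c j, f c j = 0 ∨ f c j = 1)
    (hmono : ∀ t, Monotone fun c => ∑ j ∈ range t, f c j) (t : ℕ) :
    (patterns f t).ncard ≤ 1 + t * (t + 1) / 2 := by
  induction t with
  | zero => exact (Set.ncard_le_one_of_subsingleton _).trans le_add_self
  | succ m ih =>
    have htri : (m + 1) * (m + 1 + 1) / 2 = m * (m + 1) / 2 + (m + 1) := by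
      rw [show (m + 1) * (m + 1 + 1) = m * (m + 1) + (m + 1) * 2 by ring,
        Nat.add_mul_div_right _ _ two_pos]
    have := ncard_patterns_succ_le h01 hmono m
    omega

end Patterns

section LIF

variable {β θ u0 : ℝ} {s u : ℝ → ℕ → ℝ}

lemma lif_spikeCount_le_of_le (hβ : β ∈ Set.Icc (0 : ℝ) 1) (hθ : 0 ≤ θ)
    (hu0 : ∀ c, u c 0 = u0)
    (hs : ∀ c, ∀ t : ℕ, s c (t + 1) = heaviside (β * u c t + c - θ))
    (hu : ∀ c, ∀ t : ℕ, u c (t + 1) = β * u c t + c - θ * s c (t + 1))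
    {c c' : ℝ} (hc : c ≤ c') (t : ℕ) :
    ∑ j ∈ range t, s c (j + 1) ≤ ∑ j ∈ range t, s c' (j + 1) ∧
      u c t + θ * ∑ j ∈ range t, s c (j + 1) ≤ u c' t + θ * ∑ j ∈ range t, s c' (j + 1) := by
  have h01 (c : ℝ) (j : ℕ) : s c (j + 1) = 0 ∨ s c (j + 1) = 1 :=
    hs c j ▸ heaviside_eq_zero_or_one _
  induction t with
  | zero => simp [hu0]
  | succ t ih =>
    obtain ⟨hn, hE⟩ := ih
    rw [sum_range_succ, sum_range_succ, hu c, hu c']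
    set n := ∑ j ∈ range t, s c (j + 1)
    set n' := ∑ j ∈ range t, s c' (j + 1)
    refine ⟨?_, ?_⟩
    · rcases h01 c t with h | h <;> rcases h01 c' t with h' | h' <;> rw [h, h']
      · linarith
      · linarith
      · -- `c` fires and `c'` does not, so `u c' t < u c t`, and the invariant forces `n < n'`
        rw [hs, heaviside_eq_one_iff] at h
        rw [hs, heaviside_eq_zero_iff] at h'
        have hu_lt : u c' t < u c t := by
          by_contra! hle
          nlinarith [mul_nonneg hβ.1 (sub_nonneg.2 hle)]
        have hn_lt : n < n' := by
          by_contra! hle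
          nlinarith [mul_le_mul_of_nonneg_left hle hθ]
        linarith [sum_add_one_le_of_lt (fun j _ => h01 c j) (fun j _ => h01 c' j) hn_lt]
      · linarith
    · nlinarith [mul_le_mul_of_nonneg_left hE hβ.1,
        mul_le_mul_of_nonneg_left hn (mul_nonneg (sub_nonneg.2 hβ.2) hθ)]

end LIF

theorem stmt_13_general (T : ℕ) (β θ u0 : ℝ)
    (hβ : β ∈ Set.Icc (0 : ℝ) 1) (hθ : 0 < θ)
    (s u : ℝ → ℕ → ℝ) (hu0 : ∀ c, u c 0 = u0)
    (hs : ∀ c, ∀ t : ℕ, s c (t + 1) = heaviside (β * u c t + c - θ))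
    (hu : ∀ c, ∀ t : ℕ, u c (t + 1) = β * u c t + c - θ * s c (t + 1)) :
    (∀ t : ℕ, 1 ≤ t → t ≤ T →
      Set.ncard {v : Fin t → ℝ | ∃ c : ℝ, ∀ i : Fin t, v i = s c (i.1 + 1)}
        ≤ Set.ncard {v : Fin (t - 1) → ℝ | ∃ c : ℝ, ∀ i : Fin (t - 1), v i = s c (i.1 + 1)} + t)
    ∧ Set.ncard {v : Fin T → ℝ | ∃ c : ℝ, ∀ i : Fin T, v i = s c (i.1 + 1)}
        ≤ 1 + T * (T + 1) / 2 := by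
  have h01 (c : ℝ) (j : ℕ) : s c (j + 1) = 0 ∨ s c (j + 1) = 1 :=
    hs c j ▸ heaviside_eq_zero_or_one _
  have hmono (t : ℕ) : Monotone fun c => ∑ j ∈ range t, s c (j + 1) :=
    fun _ _ hc => (lif_spikeCount_le_of_le hβ hθ.le hu0 hs hu hc t).1
  refine ⟨fun t ht _ => ?_, ncard_patterns_le (f := fun c j => s c (j + 1)) h01 hmono T⟩
  obtain ⟨m, rfl⟩ := Nat.exists_eq_add_of_le' ht
  exact ncard_patterns_succ_le (f := fun c j => s c (j + 1)) h01 hmono m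

/-- As the constant input `c` ranges over ℝ, the number `N(t)` of distinct spike
trains of length `t` produced by a single discrete-time LIF neuron satisfies
`N(t) ≤ N(t−1) + t`, and consequently `N(T) ≤ 1 + T(T+1)/2`. -/
theorem stmt_13 (T : ℕ) (hT : 1 ≤ T) (β θ u0 : ℝ)
    (hβ : β ∈ Set.Icc (0 : ℝ) 1) (hθ : 0 < θ)
    (s u : ℝ → ℕ → ℝ) (hu0 : ∀ c, u c 0 = u0)
    (hs : ∀ c, ∀ t : ℕ, s c (t + 1) = heaviside (β * u c t + c - θ))
    (hu : ∀ c, ∀ t : ℕ, u c (t + 1) = β * u c t + c - θ * s c (t + 1)) :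
    (∀ t : ℕ, 1 ≤ t → t ≤ T →
      Set.ncard {v : Fin t → ℝ | ∃ c : ℝ, ∀ i : Fin t, v i = s c (i.1 + 1)}
        ≤ Set.ncard {v : Fin (t - 1) → ℝ | ∃ c : ℝ, ∀ i : Fin (t - 1), v i = s c (i.1 + 1)} + t)
    ∧ Set.ncard {v : Fin T → ℝ | ∃ c : ℝ, ∀ i : Fin T, v i = s c (i.1 + 1)}
        ≤ 1 + T * (T + 1) / 2 :=
  stmt_13_general T β θ u0 hβ hθ s u hu0 hs hu
end
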